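/- arXiv:2002.12243 — 5 statements merged into one kernel-verified Lean document; each statement's English description precedes it below -/
import Mathlib

section
/- Let Ã, M̃₁: ℝ^m → ℝ^m be smooth, Z solve Z' = Ã(Z) + (t M̃₁(Z))' with Z(0)=Y₀, and Y solve Y' = Ã(Z(t)) with Y(0)=Y₀. Then Y''(0) = Ã'(Y₀)(α + μ) and Y'''(0) = Ã''(Y₀)(α+μ, α+μ) + Ã'(Y₀)((Ã'(Y₀) + 2M̃₁'(Y₀))(α+μ)), where α = Ã(Y₀), μ = M̃₁(Y₀). -/
open scoped ContDiff


/-- Derivatives of the exact flow Y at 0: Y''(0) and Y'''(0). -/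
theorem stmt6 {m : ℕ}
    (A M1 : (Fin m → ℝ) → (Fin m → ℝ)) (Z Y : ℝ → (Fin m → ℝ)) (Y₀ : Fin m → ℝ)
    (hA : ContDiff ℝ (⊤ : ℕ∞) A) (hM : ContDiff ℝ (⊤ : ℕ∞) M1)
    (hZ : ContDiff ℝ (⊤ : ℕ∞) Z) (hY : ContDiff ℝ (⊤ : ℕ∞) Y)
    (hodeZ : ∀ t : ℝ, deriv Z t = A (Z t) + deriv (fun s => s • M1 (Z s)) t)
    (hodeY : ∀ t : ℝ, deriv Y t = A (Z t))
    (hZ0 : Z 0 = Y₀) (hY0 : Y 0 = Y₀) :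
    iteratedDeriv 2 Y 0 = fderiv ℝ A Y₀ (A Y₀ + M1 Y₀)
    ∧ iteratedDeriv 3 Y 0
        = iteratedFDeriv ℝ 2 A Y₀ ![A Y₀ + M1 Y₀, A Y₀ + M1 Y₀]
          + fderiv ℝ A Y₀
              (fderiv ℝ A Y₀ (A Y₀ + M1 Y₀)
                + (2:ℝ) • fderiv ℝ M1 Y₀ (A Y₀ + M1 Y₀)) := by
  have hAd : Differentiable ℝ A := hA.differentiable (by norm_num)
  have hMd : Differentiable ℝ M1 := hM.differentiable (by norm_num)
  have hZd : Differentiable ℝ Z := hZ.differentiable (by norm_num)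
  -- M1 ∘ Z is smooth
  have hMZ : ContDiff ℝ (∞ : WithTop ℕ∞) (fun t => M1 (Z t)) :=
    (hM.of_le (by simp)).comp (hZ.of_le (by simp))
  have hMZd : Differentiable ℝ (fun t => M1 (Z t)) := hMZ.differentiable (by norm_num)
  -- derivative of M1 ∘ Z is smooth
  have hMZ' : ContDiff ℝ (∞ : WithTop ℕ∞) (deriv (fun t => M1 (Z t))) :=
    (contDiff_infty_iff_deriv.mp hMZ).2
  have hMZ'd : Differentiable ℝ (deriv (fun t => M1 (Z t))) := hMZ'.differentiable (by norm_num)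
  -- explicit formula for deriv Z
  have hderivZ : ∀ t : ℝ, deriv Z t
      = A (Z t) + (M1 (Z t) + t • deriv (fun s => M1 (Z s)) t) := by
    intro t
    rw [hodeZ t]
    congr 1
    have := deriv_fun_smul (c := fun s : ℝ => s) (f := fun s => M1 (Z s))
      (differentiableAt_fun_id) (hMZd t)
    simpa [add_comm] using this
  set v : Fin m → ℝ := A Y₀ + M1 Y₀ with hv
  have hZ'0 : deriv Z 0 = v := by
    rw [hderivZ 0, hZ0]; simp [hv]
  -- derivative of M1 ∘ Z at 0
  have hMZ'0 : deriv (fun t => M1 (Z t)) 0 = fderiv ℝ M1 Y₀ v := by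
    have := fderiv_comp_deriv (l := M1) (f := Z) (0 : ℝ) (hMd _) (hZd 0)
    simpa [Function.comp_def, hZ0, hZ'0] using this
  -- second derivative of Z at 0
  have hZ''0 : deriv (deriv Z) 0
      = fderiv ℝ A Y₀ v + (2:ℝ) • fderiv ℝ M1 Y₀ v := by
    have hfun : deriv Z
        = fun t => A (Z t) + (M1 (Z t) + t • deriv (fun s => M1 (Z s)) t) :=
      funext hderivZ
    rw [hfun]
    have hAZd : DifferentiableAt ℝ (fun t => A (Z t)) 0 := (hAd _).comp 0 (hZd 0)
    have hsm : DifferentiableAt ℝ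
        (fun t : ℝ => t • deriv (fun s => M1 (Z s)) t) 0 :=
      (differentiableAt_fun_id).smul (hMZ'd 0)
    rw [deriv_fun_add hAZd ((hMZd 0).fun_add hsm), deriv_fun_add (hMZd 0) hsm]
    have h1 : deriv (fun t => A (Z t)) 0 = fderiv ℝ A Y₀ v := by
      have := fderiv_comp_deriv (l := A) (f := Z) (0 : ℝ) (hAd _) (hZd 0)
      simpa [Function.comp_def, hZ0, hZ'0] using this
    have h3 : deriv (fun t : ℝ => t • deriv (fun s => M1 (Z s)) t) 0
        = fderiv ℝ M1 Y₀ v := by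
      have := deriv_fun_smul (c := fun s : ℝ => s)
        (f := deriv (fun s => M1 (Z s))) (differentiableAt_fun_id) (hMZ'd 0)
      simpa [hMZ'0] using this
    rw [h1, hMZ'0, h3, two_smul]
  -- deriv Y = A ∘ Z
  have hYfun : deriv Y = fun t => A (Z t) := funext hodeY
  have h2 : iteratedDeriv 2 Y 0 = fderiv ℝ A Y₀ v := by
    rw [show (2:ℕ) = 1 + 1 from rfl, iteratedDeriv_succ, iteratedDeriv_one, hYfun]
    have := fderiv_comp_deriv (l := A) (f := Z) (0 : ℝ) (hAd _) (hZd 0)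
    simpa [Function.comp_def, hZ0, hZ'0] using this
  refine ⟨h2, ?_⟩
  -- third derivative
  have hDD : deriv (fun t => A (Z t))
      = fun t => (fderiv ℝ A (Z t)) (deriv Z t) := by
    funext t
    have := fderiv_comp_deriv (l := A) (f := Z) t (hAd _) (hZd t)
    simpa [Function.comp_def] using this
  have h3iter : iteratedDeriv 3 Y 0
      = deriv (fun t => (fderiv ℝ A (Z t)) (deriv Z t)) 0 := by
    rw [show (3:ℕ) = 1 + 1 + 1 from rfl, iteratedDeriv_succ, iteratedDeriv_succ,
      iteratedDeriv_one, hYfun, hDD]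
  rw [h3iter]
  -- differentiate the clm application
  have hfA : ContDiff ℝ (∞ : WithTop ℕ∞) (fderiv ℝ A) := by
    have := (hA.of_le (by simp : (∞ + 1 : WithTop ℕ∞) ≤ ((⊤ : ℕ∞) : WithTop ℕ∞))).fderiv_right
      (m := (∞ : WithTop ℕ∞)) le_rfl
    exact this
  have hfAd : Differentiable ℝ (fderiv ℝ A) := hfA.differentiable (by norm_num)
  have hc : DifferentiableAt ℝ (fun t => fderiv ℝ A (Z t)) 0 :=
    (hfAd _).comp 0 (hZd 0)
  have hZ'diff : Differentiable ℝ (deriv Z) :=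
    (contDiff_infty_iff_deriv.mp (hZ.of_le (by simp))).2.differentiable (by norm_num)
  rw [deriv_clm_apply hc (hZ'diff 0)]
  have hcd : deriv (fun t => fderiv ℝ A (Z t)) 0
      = fderiv ℝ (fderiv ℝ A) Y₀ v := by
    have := fderiv_comp_deriv (l := fderiv ℝ A) (f := Z) (0 : ℝ) (hfAd _) (hZd 0)
    simpa [Function.comp_def, hZ0, hZ'0] using this
  rw [hcd, hZ0, hZ'0, hZ''0]
  congr 1
  rw [iteratedFDeriv_two_apply]
  simp
end

section
/- For the SARK update Y_τ = Y₀ + τ Σ_{i=1}^s b_i Ã(Z_i(τ)) with stages Z_i as in the SARK recursion, Y_τ'(0) = (Σ_i b_i) α and Y_τ''(0) = 2 Σ_i Σ_{j<i} b_i Ã'(Y₀)(d_{ij} μ + a_{ij} α), where α = Ã(Y₀), μ = M̃₁(Y₀). -/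
/-- First and second derivative of the discrete SARK update at τ = 0. -/
theorem stmt9 {m s : ℕ}
    (A M1 : (Fin m → ℝ) → (Fin m → ℝ)) (Y₀ : Fin m → ℝ)
    (b : Fin s → ℝ) (a d : Fin s → Fin s → ℝ)
    (Z : Fin s → ℝ → (Fin m → ℝ)) (Yt : ℝ → (Fin m → ℝ))
    (hA : ContDiff ℝ (⊤ : ℕ∞) A) (hM : ContDiff ℝ (⊤ : ℕ∞) M1)
    (hZ : ∀ i τ, Z i τ
      = Y₀ + τ • ∑ j ∈ Finset.Iio i, (d i j • M1 (Z j τ) + a i j • A (Z j τ)))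
    (hY : ∀ τ, Yt τ = Y₀ + τ • ∑ i, b i • A (Z i τ)) :
    deriv Yt 0 = (∑ i, b i) • A Y₀
    ∧ iteratedDeriv 2 Yt 0
        = (2:ℝ) • ∑ i, ∑ j ∈ Finset.Iio i,
            b i • fderiv ℝ A Y₀ (d i j • M1 Y₀ + a i j • A Y₀) := by
  classical
  -- smoothness of stages
  have smoothZaux : ∀ n : ℕ, ∀ i : Fin s, (i : ℕ) < n → ContDiff ℝ (⊤ : ℕ∞) (Z i) := by
    intro n
    induction n with
    | zero => intro i hi; omega
    | succ n ih =>
      intro i hi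
      have hfun : Z i = fun τ => Y₀ + τ • ∑ j ∈ Finset.Iio i,
          (d i j • M1 (Z j τ) + a i j • A (Z j τ)) := funext (hZ i)
      rw [hfun]
      refine contDiff_const.add (contDiff_id.smul (ContDiff.sum fun j hj => ?_))
      have hji : (j : ℕ) < (i : ℕ) := Fin.lt_iff_val_lt_val.mp (Finset.mem_Iio.mp hj)
      have hjn : (j : ℕ) < n := by omega
      exact ((hM.comp (ih j hjn)).const_smul _).add ((hA.comp (ih j hjn)).const_smul _)
  have smoothZ : ∀ i, ContDiff ℝ (⊤ : ℕ∞) (Z i) := fun i => smoothZaux (i + 1) i (Nat.lt_succ_self _)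
  have hZ0 : ∀ i, Z i 0 = Y₀ := by intro i; rw [hZ]; simp
  -- helper: derivative of τ ↦ c + τ • g τ
  have key : ∀ (g : ℝ → Fin m → ℝ) (c : Fin m → ℝ) (t : ℝ), DifferentiableAt ℝ g t →
      HasDerivAt (fun τ => c + τ • g τ) (g t + t • deriv g t) t := by
    intro g c t hg
    have h1 := (hasDerivAt_id t).smul hg.hasDerivAt
    simpa [add_comm] using h1.const_add c
  -- derivative of stages at 0
  set DZ : Fin s → Fin m → ℝ :=
    fun i => ∑ j ∈ Finset.Iio i, (d i j • M1 Y₀ + a i j • A Y₀) with hDZ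
  have smoothG : ∀ i, ContDiff ℝ (⊤ : ℕ∞) (fun τ => ∑ j ∈ Finset.Iio i,
      (d i j • M1 (Z j τ) + a i j • A (Z j τ))) := fun i =>
    ContDiff.sum fun j _ =>
      ((hM.comp (smoothZ j)).const_smul _).add ((hA.comp (smoothZ j)).const_smul _)
  have hZd : ∀ i, HasDerivAt (Z i) (DZ i) 0 := by
    intro i
    have hfun : Z i = fun τ => Y₀ + τ • ∑ j ∈ Finset.Iio i,
        (d i j • M1 (Z j τ) + a i j • A (Z j τ)) := funext (hZ i)
    have h := key _ Y₀ 0 ((smoothG i).differentiable (by simp)).differentiableAt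
    rw [← hfun] at h
    simpa [hZ0, hDZ] using h
  -- the function H
  set H : ℝ → Fin m → ℝ := fun τ => ∑ i, b i • A (Z i τ) with hH
  have smoothH : ContDiff ℝ (⊤ : ℕ∞) H :=
    ContDiff.sum fun i _ => (hA.comp (smoothZ i)).const_smul _
  have hYfun : Yt = fun τ => Y₀ + τ • H τ := funext hY
  have hH0 : H 0 = (∑ i, b i) • A Y₀ := by
    simp [hH, hZ0, Finset.sum_smul]
  -- derivative of H at 0
  have hAd : HasFDerivAt A (fderiv ℝ A Y₀) Y₀ :=
    ((hA.differentiable (by simp)) Y₀).hasFDerivAt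
  have hHd : HasDerivAt H (∑ i, b i • fderiv ℝ A Y₀ (DZ i)) 0 := by
    refine HasDerivAt.fun_sum fun i _ => ?_
    have hAi : HasFDerivAt A (fderiv ℝ A Y₀) (Z i 0) := by rw [hZ0]; exact hAd
    exact (hAi.comp_hasDerivAt 0 (hZd i)).const_smul (b i)
  -- derivative of Yt everywhere
  have hdYt : ∀ t, HasDerivAt Yt (H t + t • deriv H t) t := by
    intro t
    have := key H Y₀ t (smoothH.differentiable (by simp)).differentiableAt
    rwa [← hYfun] at this
  have derivYt : deriv Yt = fun t => H t + t • deriv H t :=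
    funext fun t => (hdYt t).deriv
  constructor
  · rw [(hdYt 0).deriv]
    simp [hH0]
  · rw [iteratedDeriv_succ, iteratedDeriv_one, derivYt]
    have hdH : Differentiable ℝ (deriv H) :=
      ((contDiff_infty_iff_deriv.mp (smoothH.of_le (by simp))).2).differentiable (by simp)
    have h2 : HasDerivAt (fun t => H t + t • deriv H t)
        (deriv H 0 + deriv H 0) 0 := by
      have := ((smoothH.differentiable (by simp)) 0).hasDerivAt.fun_add
        ((hasDerivAt_id 0).fun_smul (hdH 0).hasDerivAt)
      simpa using this
    rw [h2.deriv, hHd.deriv]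
    have hsum : ∑ i, b i • fderiv ℝ A Y₀ (DZ i)
        = ∑ i, ∑ j ∈ Finset.Iio i,
            b i • fderiv ℝ A Y₀ (d i j • M1 Y₀ + a i j • A Y₀) := by
      refine Finset.sum_congr rfl fun i _ => ?_
      rw [hDZ]
      simp only [map_sum, Finset.smul_sum]
    rw [hsum, two_smul]
end

section
/- If the SARK coefficients satisfy 2 Σ_i Σ_{j<i} b_i d_{ij} = 1 and 2 Σ_i Σ_{j<i} b_i a_{ij} = 1, then the second derivatives match: Y_τ''(0) = Y''(0) = Ã'(Y₀)(Ã(Y₀) + M̃₁(Y₀)), for every pair of smooth maps Ã, M̃₁: ℝ^m → ℝ^m and every Y₀. -/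
private lemma key2 {E : Type*} [NormedAddCommGroup E] [NormedSpace ℝ E] (c : E) (g : ℝ → E)
    (hg : ContDiff ℝ (⊤ : ℕ∞) g) :
    iteratedDeriv 2 (fun τ => c + τ • g τ) 0 = (2:ℝ) • deriv g 0 := by
  have hgd : Differentiable ℝ g := hg.differentiable (by simp)
  have hgi : ContDiff ℝ ((⊤:ℕ∞) : WithTop ℕ∞) g := hg.of_le (by simp)
  have hg'i : ContDiff ℝ ((⊤:ℕ∞) : WithTop ℕ∞) (deriv g) := by
    simpa using hgi.iterate_deriv 1
  have hg'd : Differentiable ℝ (deriv g) := hg'i.differentiable (by simp)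
  have h1 : ∀ t, HasDerivAt (fun τ => c + τ • g τ) (t • deriv g t + g t) t := by
    intro t
    have := ((hasDerivAt_id t).fun_smul (hgd t).hasDerivAt).const_add c
    simpa using this
  have h2 : deriv (fun τ => c + τ • g τ) = fun t => t • deriv g t + g t :=
    funext fun t => (h1 t).deriv
  rw [iteratedDeriv_succ, iteratedDeriv_one, h2]
  have h3 : HasDerivAt (fun t : ℝ => t • deriv g t + g t)
      ((0:ℝ) • deriv (deriv g) 0 + (1:ℝ) • deriv g 0 + deriv g 0) 0 :=
    ((hasDerivAt_id (0:ℝ)).fun_smul ((hg'd 0).hasDerivAt)).add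
      (hgd 0).hasDerivAt
  rw [h3.deriv]
  simp [two_smul]

/-- The second-order conditions imply matching of second derivatives. -/
theorem stmt11 {m s : ℕ}
    (A M1 : (Fin m → ℝ) → (Fin m → ℝ)) (Y₀ : Fin m → ℝ)
    (b : Fin s → ℝ) (a d : Fin s → Fin s → ℝ)
    (Z Y : ℝ → (Fin m → ℝ))
    (Zs : Fin s → ℝ → (Fin m → ℝ)) (Yt : ℝ → (Fin m → ℝ))
    (hA : ContDiff ℝ (⊤ : ℕ∞) A) (hM : ContDiff ℝ (⊤ : ℕ∞) M1)
    (hZ : ContDiff ℝ (⊤ : ℕ∞) Z) (hY : ContDiff ℝ (⊤ : ℕ∞) Y)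
    (hodeZ : ∀ t : ℝ, deriv Z t = A (Z t) + deriv (fun u => u • M1 (Z u)) t)
    (hodeY : ∀ t : ℝ, deriv Y t = A (Z t))
    (hZ0 : Z 0 = Y₀) (hY0 : Y 0 = Y₀)
    (hZs : ∀ i τ, Zs i τ
      = Y₀ + τ • ∑ j ∈ Finset.Iio i, (d i j • M1 (Zs j τ) + a i j • A (Zs j τ)))
    (hYt : ∀ τ, Yt τ = Y₀ + τ • ∑ i, b i • A (Zs i τ))
    (hcd : 2 * ∑ i, ∑ j ∈ Finset.Iio i, b i * d i j = 1)
    (hca : 2 * ∑ i, ∑ j ∈ Finset.Iio i, b i * a i j = 1) :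
    iteratedDeriv 2 Yt 0 = iteratedDeriv 2 Y 0
    ∧ iteratedDeriv 2 Y 0 = fderiv ℝ A Y₀ (A Y₀ + M1 Y₀) := by
  -- second derivative of exact flow
  have hM1Z : deriv (fun u => u • M1 (Z u)) 0 = M1 Y₀ := by
    have hdMZ : Differentiable ℝ (fun u => M1 (Z u)) := (hM.comp hZ).differentiable (by simp)
    have h := (hasDerivAt_id (0:ℝ)).fun_smul (hdMZ 0).hasDerivAt
    have h' : HasDerivAt (fun u => u • M1 (Z u)) (M1 Y₀) 0 := by simpa [hZ0] using h
    exact h'.deriv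
  have hdZ0 : deriv Z 0 = A Y₀ + M1 Y₀ := by rw [hodeZ 0, hZ0, hM1Z]
  have hY2 : iteratedDeriv 2 Y 0 = fderiv ℝ A Y₀ (A Y₀ + M1 Y₀) := by
    rw [iteratedDeriv_succ, iteratedDeriv_one]
    have hderivY : deriv Y = fun t => A (Z t) := funext hodeY
    rw [hderivY]
    have hZdiff : HasDerivAt Z (A Y₀ + M1 Y₀) 0 :=
      hdZ0 ▸ (hZ.differentiable (by simp) 0).hasDerivAt
    have hAf : HasFDerivAt A (fderiv ℝ A Y₀) (Z 0) :=
      hZ0 ▸ (hA.differentiable (by simp) Y₀).hasFDerivAt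
    have hc := hAf.comp_hasDerivAt 0 hZdiff
    have := hc.deriv
    simpa [Function.comp_def] using this
  refine ⟨?_, hY2⟩
  -- smoothness of the stages
  have hZsSmooth : ∀ i : Fin s, ContDiff ℝ (⊤ : ℕ∞) (Zs i) := by
    have H : ∀ n : ℕ, ∀ i : Fin s, (i : ℕ) < n → ContDiff ℝ (⊤ : ℕ∞) (Zs i) := by
      intro n
      induction n with
      | zero => intro i hi; exact absurd hi (Nat.not_lt_zero _)
      | succ n ih =>
        intro i hi
        have heq : Zs i = fun τ =>
            Y₀ + τ • ∑ j ∈ Finset.Iio i, (d i j • M1 (Zs j τ) + a i j • A (Zs j τ)) :=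
          funext (hZs i)
        rw [heq]
        refine contDiff_const.add (contDiff_id.smul ?_)
        refine ContDiff.sum fun j hj => ?_
        have hji : (j : ℕ) < n := by
          have : j < i := Finset.mem_Iio.mp hj
          have := Fin.lt_def.mp this
          omega
        exact (contDiff_const.fun_smul (hM.comp (ih j hji))).add
          (contDiff_const.fun_smul (hA.comp (ih j hji)))
    exact fun i => H _ i (Nat.lt_succ_self _)
  have hZs0 : ∀ j, Zs j 0 = Y₀ := fun j => by rw [hZs]; simp
  set G : Fin s → (Fin m → ℝ) :=
    fun i => ∑ j ∈ Finset.Iio i, (d i j • M1 Y₀ + a i j • A Y₀) with hG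
  -- derivative of the stages at 0
  have hZsD : ∀ i, HasDerivAt (Zs i) (G i) 0 := by
    intro i
    have hGf : ContDiff ℝ (⊤ : ℕ∞) (fun τ =>
        ∑ j ∈ Finset.Iio i, (d i j • M1 (Zs j τ) + a i j • A (Zs j τ))) := by
      refine ContDiff.sum fun j _ => ?_
      exact (contDiff_const.fun_smul (hM.comp (hZsSmooth j))).add
        (contDiff_const.fun_smul (hA.comp (hZsSmooth j)))
    have h := ((hasDerivAt_id (0:ℝ)).fun_smul
      ((hGf.differentiable (by simp) 0).hasDerivAt)).const_add Y₀
    have heq : Zs i = fun τ =>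
        Y₀ + τ • ∑ j ∈ Finset.Iio i, (d i j • M1 (Zs j τ) + a i j • A (Zs j τ)) :=
      funext (hZs i)
    rw [heq]
    refine h.congr_deriv ?_
    simp [hG, hZs0]
  -- derivative of the stage-sum at 0
  have hSd : HasDerivAt (fun τ => ∑ i, b i • A (Zs i τ))
      (∑ i, b i • (fderiv ℝ A Y₀) (G i)) 0 := by
    refine HasDerivAt.fun_sum fun i _ => ?_
    have hAf : HasFDerivAt A (fderiv ℝ A Y₀) (Zs i 0) :=
      (hZs0 i) ▸ (hA.differentiable (by simp) Y₀).hasFDerivAt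
    have hc := (hAf.comp_hasDerivAt 0 (hZsD i)).fun_const_smul (b i)
    simpa [Function.comp] using hc
  have hS : ContDiff ℝ (⊤ : ℕ∞) (fun τ => ∑ i, b i • A (Zs i τ)) :=
    ContDiff.sum fun i _ => contDiff_const.fun_smul (hA.comp (hZsSmooth i))
  have hYt2 : iteratedDeriv 2 Yt 0
      = (2:ℝ) • deriv (fun τ => ∑ i, b i • A (Zs i τ)) 0 := by
    rw [funext hYt]; exact key2 Y₀ _ hS
  have hmap : ∑ i, b i • (fderiv ℝ A Y₀) (G i)
      = (fderiv ℝ A Y₀) (∑ i, b i • G i) := by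
    rw [map_sum]
    simp [map_smul]
  have hsum : ∑ i, b i • G i = (1/2 : ℝ) • M1 Y₀ + (1/2 : ℝ) • A Y₀ := by
    have h1 : ∑ i, b i • G i
        = (∑ i, ∑ j ∈ Finset.Iio i, b i * d i j) • M1 Y₀
          + (∑ i, ∑ j ∈ Finset.Iio i, b i * a i j) • A Y₀ := by
      simp [hG, Finset.smul_sum, smul_add, smul_smul, Finset.sum_add_distrib,
        Finset.sum_smul]
    rw [h1,
      show (∑ i, ∑ j ∈ Finset.Iio i, b i * d i j) = (1/2 : ℝ) by linarith,
      show (∑ i, ∑ j ∈ Finset.Iio i, b i * a i j) = (1/2 : ℝ) by linarith]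
  rw [hYt2, hSd.deriv, hmap, hsum, hY2, ← map_smul]
  congr 1
  rw [smul_add, smul_smul, smul_smul]
  norm_num
  abel
end

section
/- If the SARK coefficients satisfy the seven third-order conditions 3Σb_i(Σ_{j<i}a_{ij})²=1, 3Σb_i(Σ_{j<i}d_{ij})²=1, 3Σb_i(Σ_{j<i}a_{ij})(Σ_{j<i}d_{ij})=1, 6ΣΣΣ b_i a_{ij} a_{jk}=1, 6ΣΣΣ b_i a_{ij} d_{jk}=1, 3ΣΣΣ b_i d_{ij} a_{jk}=1, 3ΣΣΣ b_i d_{ij} d_{jk}=1 (sums over i ≤ s, j < i, k < j), then the third derivative of the discrete SARK flow at τ=0 equals the third derivative of the exact flow, for all smooth Ã, M̃₁ and all Y₀. -/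
/-!
For `g τ = Y₀ + τ • F τ` one has `g⁽ᵏ⁾(0) = k • F⁽ᵏ⁻¹⁾(0)`. Applied to the stages and to the
discrete flow, this writes the third derivative of the discrete flow at `0` as a combination of
the elementary differentials `A''(u, v)` (`u, v ∈ {x, y}`), `A'A'x`, `A'A'y`, `A'M'x`, `A'M'y`,
where `x = A Y₀` and `y = M Y₀`, weighted by the sums occurring in the order conditions.
The exact flow has `Z'(0) = x + y` and `Z''(0) = A'(x + y) + 2 M'(x + y)`, which gives the same
differentials with weights `1, …, 1, 2, 2`; the seven conditions say that the weights agree.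
-/

open Finset

variable {E F : Type*} [NormedAddCommGroup E] [NormedSpace ℝ E]
  [NormedAddCommGroup F] [NormedSpace ℝ F]

theorem iteratedDeriv_succ_id_smul {f : ℝ → E} {k : ℕ} (hf : ContDiff ℝ (k + 1) f) :
    iteratedDeriv (k + 1) (fun t => t • f t)
      = fun t => t • iteratedDeriv (k + 1) f t + (k + 1 : ℝ) • iteratedDeriv k f t := by
  induction k with
  | zero =>
    funext t
    have hd := ((hf.differentiable one_ne_zero) t).hasDerivAt
    simpa [iteratedDeriv_one, add_comm] using ((hasDerivAt_id' t).fun_smul hd).deriv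
  | succ k ih =>
    rw [iteratedDeriv_succ, ih (hf.of_le (by norm_cast; omega))]
    funext t
    have hk1 := (hf.differentiable_iteratedDeriv (k + 1) (by norm_cast; omega) t).hasDerivAt
    have hk := (hf.differentiable_iteratedDeriv k (by norm_cast; omega) t).hasDerivAt
    rw [(((hasDerivAt_id' t).fun_smul hk1).fun_add (hk.fun_const_smul _)).deriv]
    simp only [iteratedDeriv_succ, one_smul]
    push_cast
    module

theorem iteratedDeriv_succ_id_smul_zero {f : ℝ → E} {k : ℕ} (hf : ContDiff ℝ (k + 1) f) :
    iteratedDeriv (k + 1) (fun t => t • f t) 0 = (k + 1 : ℝ) • iteratedDeriv k f 0 := by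
  simp [iteratedDeriv_succ_id_smul hf]

theorem deriv_comp_eq_fderiv_apply {A : E → F} {z : ℝ → E} {t : ℝ}
    (hA : DifferentiableAt ℝ A (z t)) (hz : DifferentiableAt ℝ z t) :
    deriv (fun s => A (z s)) t = fderiv ℝ A (z t) (deriv z t) :=
  fderiv_comp_deriv t hA hz

theorem iteratedDeriv_two_comp {A : E → F} {z : ℝ → E} (hA : ContDiff ℝ 2 A) (hz : ContDiff ℝ 2 z)
    (t : ℝ) :
    iteratedDeriv 2 (fun s => A (z s)) t
      = fderiv ℝ (fderiv ℝ A) (z t) (deriv z t) (deriv z t)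
        + fderiv ℝ A (z t) (iteratedDeriv 2 z t) := by
  have hAd : Differentiable ℝ A := hA.differentiable two_ne_zero
  have hzd : Differentiable ℝ z := hz.differentiable two_ne_zero
  have hA' : Differentiable ℝ (fderiv ℝ A) :=
    (hA.fderiv_right (m := 1) le_rfl).differentiable one_ne_zero
  have hz' : Differentiable ℝ (deriv z) := by
    simpa using hz.differentiable_iteratedDeriv 1 (by norm_num)
  have hfirst : deriv (fun s => A (z s)) = fun s => fderiv ℝ A (z s) (deriv z s) :=
    funext fun s => deriv_comp_eq_fderiv_apply (hAd _) (hzd s)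
  rw [iteratedDeriv_succ, iteratedDeriv_one, hfirst, iteratedDeriv_succ, iteratedDeriv_one]
  exact (((hA' _).hasFDerivAt.comp_hasDerivAt t (hzd t).hasDerivAt).clm_apply
    (hz' t).hasDerivAt).deriv

section Stages

variable {s : ℕ} {A M : E → E} {Y₀ : E} {a d : Fin s → Fin s → ℝ} {Zs : Fin s → ℝ → E}

def IsSARKStages (A M : E → E) (Y₀ : E) (a d : Fin s → Fin s → ℝ) (Zs : Fin s → ℝ → E) : Prop :=
  ∀ i τ, Zs i τ = Y₀ + τ • ∑ j ∈ Iio i, (d i j • M (Zs j τ) + a i j • A (Zs j τ))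

theorem contDiff_sark_stage {n : WithTop ℕ∞} (hA : ContDiff ℝ n A) (hM : ContDiff ℝ n M)
    (hZs : IsSARKStages A M Y₀ a d Zs) (i : Fin s) : ContDiff ℝ n (Zs i) := by
  induction i using WellFoundedLT.induction with
  | ind i ih =>
    rw [funext (hZs i)]
    refine contDiff_const.add (contDiff_id.smul (ContDiff.sum fun j hj => ?_))
    have hj := ih j (mem_Iio.mp hj)
    exact ((hM.comp hj).const_smul _).add ((hA.comp hj).const_smul _)

theorem contDiff_sark_increment {n : WithTop ℕ∞} (hA : ContDiff ℝ n A) (hM : ContDiff ℝ n M)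
    (hZs : IsSARKStages A M Y₀ a d Zs) (i : Fin s) :
    ContDiff ℝ n fun τ => ∑ j ∈ Iio i, (d i j • M (Zs j τ) + a i j • A (Zs j τ)) :=
  ContDiff.sum fun j _ => ((hM.comp (contDiff_sark_stage hA hM hZs j)).const_smul _).add
    ((hA.comp (contDiff_sark_stage hA hM hZs j)).const_smul _)

theorem sark_stage_zero (hZs : IsSARKStages A M Y₀ a d Zs) (i : Fin s) : Zs i 0 = Y₀ := by
  simp [hZs i 0]

theorem deriv_sark_stage_zero (hA : ContDiff ℝ 1 A) (hM : ContDiff ℝ 1 M)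
    (hZs : IsSARKStages A M Y₀ a d Zs) (i : Fin s) :
    deriv (Zs i) 0 = (∑ j ∈ Iio i, a i j) • A Y₀ + (∑ j ∈ Iio i, d i j) • M Y₀ := by
  rw [← iteratedDeriv_one, funext (hZs i), iteratedDeriv_const_add one_pos]
  refine (iteratedDeriv_succ_id_smul_zero (k := 0)
    (by simpa using contDiff_sark_increment hA hM hZs i)).trans ?_
  simp only [sark_stage_zero hZs, iteratedDeriv_zero, sum_add_distrib, ← sum_smul]
  rw [Nat.cast_zero, zero_add, one_smul, add_comm]

theorem iteratedDeriv_two_sark_stage_zero (hA : ContDiff ℝ 2 A) (hM : ContDiff ℝ 2 M)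
    (hZs : IsSARKStages A M Y₀ a d Zs) (i : Fin s) :
    iteratedDeriv 2 (Zs i) 0 = (2 : ℝ) • ∑ j ∈ Iio i,
      (d i j • fderiv ℝ M Y₀ (deriv (Zs j) 0) + a i j • fderiv ℝ A Y₀ (deriv (Zs j) 0)) := by
  have hZ := contDiff_sark_stage hA hM hZs
  have hderiv : ∀ (G : E → E), ContDiff ℝ 2 G → ∀ j, HasDerivAt (fun τ => G (Zs j τ))
      (fderiv ℝ G Y₀ (deriv (Zs j) 0)) 0 := fun G hG j => by
    rw [← sark_stage_zero hZs j]
    exact ((hG.differentiable two_ne_zero) _).hasFDerivAt.comp_hasDerivAt 0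
      ((hZ j).differentiable two_ne_zero 0).hasDerivAt
  rw [funext (hZs i), iteratedDeriv_const_add two_pos]
  refine (iteratedDeriv_succ_id_smul_zero (k := 1)
    ((contDiff_sark_increment hA hM hZs i).of_le (by norm_num))).trans ?_
  rw [iteratedDeriv_one, (HasDerivAt.fun_sum fun j _ =>
      ((hderiv M hM j).fun_const_smul (d i j)).fun_add ((hderiv A hA j).fun_const_smul _)).deriv]
  norm_num

theorem iteratedDeriv_three_sark_zero {b : Fin s → ℝ} {Yt : ℝ → E}
    (hA : ContDiff ℝ 3 A) (hM : ContDiff ℝ 3 M) (hZs : IsSARKStages A M Y₀ a d Zs)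
    (hYt : ∀ τ, Yt τ = Y₀ + τ • ∑ i, b i • A (Zs i τ)) :
    iteratedDeriv 3 Yt 0 = (3 : ℝ) • ∑ i, b i • (fderiv ℝ (fderiv ℝ A) Y₀ (deriv (Zs i) 0)
      (deriv (Zs i) 0) + fderiv ℝ A Y₀ (iteratedDeriv 2 (Zs i) 0)) := by
  have hZ := contDiff_sark_stage hA hM hZs
  have hAZ : ∀ i, ContDiff ℝ 3 fun τ => b i • A (Zs i τ) := fun i => (hA.comp (hZ i)).const_smul _
  rw [funext hYt, iteratedDeriv_const_add three_pos]
  refine (iteratedDeriv_succ_id_smul_zero (k := 2) (ContDiff.sum fun i _ => hAZ i)).trans ?_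
  rw [iteratedDeriv_fun_sum fun i _ => (hAZ i).contDiffAt.of_le (by norm_num)]
  norm_num only [iteratedDeriv_fun_const_smul_field,
    iteratedDeriv_two_comp (hA.of_le (by norm_num)) ((hZ _).of_le (by norm_num)),
    sark_stage_zero hZs]

end Stages

section ExactFlow

variable {A M : E → E} {Y₀ : E} {Z : ℝ → E}

theorem deriv_exact_flow_zero (hM : ContDiff ℝ 1 M) (hZ : ContDiff ℝ 1 Z)
    (hodeZ : ∀ t, deriv Z t = A (Z t) + deriv (fun u => u • M (Z u)) t) (hZ0 : Z 0 = Y₀) :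
    deriv Z 0 = A Y₀ + M Y₀ := by
  have hMZ : ContDiff ℝ 1 fun u => M (Z u) := hM.comp hZ
  rw [hodeZ, ← iteratedDeriv_one (f := fun u => u • M (Z u)),
    iteratedDeriv_succ_id_smul_zero (k := 0) (by simpa using hMZ)]
  simp [hZ0]

theorem iteratedDeriv_two_exact_flow_zero (hA : ContDiff ℝ 2 A) (hM : ContDiff ℝ 2 M)
    (hZ : ContDiff ℝ 2 Z)
    (hodeZ : ∀ t, deriv Z t = A (Z t) + deriv (fun u => u • M (Z u)) t) (hZ0 : Z 0 = Y₀) :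
    iteratedDeriv 2 Z 0
      = fderiv ℝ A Y₀ (A Y₀ + M Y₀) + (2 : ℝ) • fderiv ℝ M Y₀ (A Y₀ + M Y₀) := by
  have hMZ : ContDiff ℝ 2 fun u => M (Z u) := hM.comp hZ
  have hZd : Differentiable ℝ Z := hZ.differentiable two_ne_zero
  have hZ' := deriv_exact_flow_zero (hM.of_le one_le_two) (hZ.of_le one_le_two) hodeZ hZ0
  have hsmul : iteratedDeriv 2 (fun u => u • M (Z u)) 0 = (2 : ℝ) • deriv (fun u => M (Z u)) 0 := by
    refine (iteratedDeriv_succ_id_smul_zero (k := 1) (hMZ.of_le (by norm_num))).trans ?_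
    norm_num
  have hsmul_diff : DifferentiableAt ℝ (deriv fun u => u • M (Z u)) 0 := by
    have h : ContDiff ℝ 2 fun u => u • M (Z u) := contDiff_id.smul hMZ
    simpa using (h.differentiable_iteratedDeriv 1 (by norm_num)) 0
  have hAZ_diff : DifferentiableAt ℝ (fun u => A (Z u)) 0 :=
    ((hA.differentiable two_ne_zero).comp hZd) 0
  rw [iteratedDeriv_succ, iteratedDeriv_one, funext hodeZ, deriv_fun_add hAZ_diff hsmul_diff,
    ← iteratedDeriv_one (f := fun u => u • M (Z u)), ← iteratedDeriv_succ, hsmul,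
    deriv_comp_eq_fderiv_apply ((hA.differentiable two_ne_zero) _) (hZd 0),
    deriv_comp_eq_fderiv_apply ((hM.differentiable two_ne_zero) _) (hZd 0), hZ0, hZ']

theorem iteratedDeriv_three_exact_flow_zero {Y : ℝ → E} (hA : ContDiff ℝ 2 A)
    (hM : ContDiff ℝ 2 M) (hZ : ContDiff ℝ 2 Z)
    (hodeZ : ∀ t, deriv Z t = A (Z t) + deriv (fun u => u • M (Z u)) t)
    (hodeY : ∀ t, deriv Y t = A (Z t)) (hZ0 : Z 0 = Y₀) :
    iteratedDeriv 3 Y 0 = fderiv ℝ (fderiv ℝ A) Y₀ (A Y₀ + M Y₀) (A Y₀ + M Y₀)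
      + fderiv ℝ A Y₀ (fderiv ℝ A Y₀ (A Y₀ + M Y₀) + (2 : ℝ) • fderiv ℝ M Y₀ (A Y₀ + M Y₀)) := by
  rw [iteratedDeriv_succ', funext hodeY, iteratedDeriv_two_comp hA hZ, hZ0,
    deriv_exact_flow_zero (hM.of_le one_le_two) (hZ.of_le one_le_two) hodeZ hZ0,
    iteratedDeriv_two_exact_flow_zero hA hM hZ hodeZ hZ0]

end ExactFlow

section OrderConditions

variable {s : ℕ} (b c e : Fin s → ℝ) (a d : Fin s → Fin s → ℝ) (x y : E)

theorem sum_Iio_Iio_mul_eq (f g : Fin s → Fin s → ℝ) :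
    ∑ i, ∑ j ∈ Iio i, ∑ k ∈ Iio j, b i * f i j * g j k
      = ∑ i, b i * ∑ j ∈ Iio i, f i j * ∑ k ∈ Iio j, g j k := by
  simp only [mul_sum, mul_assoc]

theorem sum_smul_bilinear_apply_self (B : E →L[ℝ] E →L[ℝ] F) :
    ∑ i, b i • B (c i • x + e i • y) (c i • x + e i • y)
      = (∑ i, b i * c i ^ 2) • B x x + (∑ i, b i * c i * e i) • (B x y + B y x)
        + (∑ i, b i * e i ^ 2) • B y y := by
  simp only [map_add, map_smul, add_apply, smul_apply,
    smul_add, smul_smul, sum_add_distrib, ← sum_smul]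
  match_scalars <;> simp only [mul_one] <;> exact sum_congr rfl fun _ _ => by ring

theorem sum_smul_linear_apply_sum_Iio (L : E →L[ℝ] F) (P N : E →L[ℝ] E) :
    ∑ i, b i • L (∑ j ∈ Iio i, (d i j • N (c j • x + e j • y) + a i j • P (c j • x + e j • y)))
      = (∑ i, b i * ∑ j ∈ Iio i, a i j * c j) • L (P x)
        + (∑ i, b i * ∑ j ∈ Iio i, a i j * e j) • L (P y)
        + (∑ i, b i * ∑ j ∈ Iio i, d i j * c j) • L (N x)
        + (∑ i, b i * ∑ j ∈ Iio i, d i j * e j) • L (N y) := by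
  simp only [map_add, map_smul, smul_add, smul_smul, sum_add_distrib, ← sum_smul]
  match_scalars <;> simp only [mul_one, mul_sum]

theorem sark_order_three_identity (B : E →L[ℝ] E →L[ℝ] F) (L : E →L[ℝ] F) (P N : E →L[ℝ] E)
    (h1 : 3 * ∑ i, b i * c i ^ 2 = 1) (h2 : 3 * ∑ i, b i * e i ^ 2 = 1)
    (h3 : 3 * ∑ i, b i * c i * e i = 1)
    (h4 : 6 * ∑ i, b i * ∑ j ∈ Iio i, a i j * c j = 1)
    (h5 : 6 * ∑ i, b i * ∑ j ∈ Iio i, a i j * e j = 1)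
    (h6 : 3 * ∑ i, b i * ∑ j ∈ Iio i, d i j * c j = 1)
    (h7 : 3 * ∑ i, b i * ∑ j ∈ Iio i, d i j * e j = 1) :
    (3 : ℝ) • ∑ i, b i • (B (c i • x + e i • y) (c i • x + e i • y)
        + L ((2 : ℝ) • ∑ j ∈ Iio i,
          (d i j • N (c j • x + e j • y) + a i j • P (c j • x + e j • y))))
      = B (x + y) (x + y) + L (P (x + y) + (2 : ℝ) • N (x + y)) := by
  rw [sum_congr rfl fun i _ => smul_add (b i) _ _, sum_add_distrib, sum_smul_bilinear_apply_self]
  simp only [map_smul L (2 : ℝ), smul_comm (b _) (2 : ℝ), ← smul_sum]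
  rw [sum_smul_linear_apply_sum_Iio]
  simp only [map_add, add_apply, map_smul]
  match_scalars
  · linear_combination h1
  · linear_combination h3
  · linear_combination h3
  · linear_combination h2
  · linear_combination h4
  · linear_combination h5
  · linear_combination 2 * h6
  · linear_combination 2 * h7

end OrderConditions

theorem stmt12_general {m s : ℕ}
    (A M1 : (Fin m → ℝ) → (Fin m → ℝ)) (Y₀ : Fin m → ℝ)
    (b : Fin s → ℝ) (a d : Fin s → Fin s → ℝ)
    (Z Y : ℝ → (Fin m → ℝ))
    (Zs : Fin s → ℝ → (Fin m → ℝ)) (Yt : ℝ → (Fin m → ℝ))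
    (hA : ContDiff ℝ 3 A) (hM : ContDiff ℝ 3 M1)
    (hZ : ContDiff ℝ 3 Z)
    (hodeZ : ∀ t : ℝ, deriv Z t = A (Z t) + deriv (fun u => u • M1 (Z u)) t)
    (hodeY : ∀ t : ℝ, deriv Y t = A (Z t))
    (hZ0 : Z 0 = Y₀)
    (hZs : ∀ i τ, Zs i τ
      = Y₀ + τ • ∑ j ∈ Finset.Iio i, (d i j • M1 (Zs j τ) + a i j • A (Zs j τ)))
    (hYt : ∀ τ, Yt τ = Y₀ + τ • ∑ i, b i • A (Zs i τ))
    (hc1 : 3 * ∑ i, b i * (∑ j ∈ Finset.Iio i, a i j)^2 = 1)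
    (hc2 : 3 * ∑ i, b i * (∑ j ∈ Finset.Iio i, d i j)^2 = 1)
    (hc3 : 3 * ∑ i, b i * (∑ j ∈ Finset.Iio i, a i j) * (∑ j ∈ Finset.Iio i, d i j) = 1)
    (hc4 : 6 * ∑ i, ∑ j ∈ Finset.Iio i, ∑ k ∈ Finset.Iio j, b i * a i j * a j k = 1)
    (hc5 : 6 * ∑ i, ∑ j ∈ Finset.Iio i, ∑ k ∈ Finset.Iio j, b i * a i j * d j k = 1)
    (hc6 : 3 * ∑ i, ∑ j ∈ Finset.Iio i, ∑ k ∈ Finset.Iio j, b i * d i j * a j k = 1)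
    (hc7 : 3 * ∑ i, ∑ j ∈ Finset.Iio i, ∑ k ∈ Finset.Iio j, b i * d i j * d j k = 1) :
    iteratedDeriv 3 Yt 0 = iteratedDeriv 3 Y 0 := by
  have hA2 : ContDiff ℝ 2 A := hA.of_le (by norm_num)
  have hM2 : ContDiff ℝ 2 M1 := hM.of_le (by norm_num)
  rw [iteratedDeriv_three_sark_zero hA hM hZs hYt,
    iteratedDeriv_three_exact_flow_zero hA2 hM2 (hZ.of_le (by norm_num)) hodeZ hodeY hZ0]
  simp only [iteratedDeriv_two_sark_stage_zero hA2 hM2 hZs,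
    deriv_sark_stage_zero (hA.of_le (by norm_num)) (hM.of_le (by norm_num)) hZs]
  rw [sum_Iio_Iio_mul_eq] at hc4 hc5 hc6 hc7
  exact sark_order_three_identity b (fun i => ∑ j ∈ Iio i, a i j) (fun i => ∑ j ∈ Iio i, d i j)
    a d (A Y₀) (M1 Y₀) _ _ _ _ hc1 hc2 hc3 hc4 hc5 hc6 hc7

/-- The seven third-order conditions imply matching of third derivatives. -/
theorem stmt12 {m s : ℕ}
    (A M1 : (Fin m → ℝ) → (Fin m → ℝ)) (Y₀ : Fin m → ℝ)
    (b : Fin s → ℝ) (a d : Fin s → Fin s → ℝ)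
    (Z Y : ℝ → (Fin m → ℝ))
    (Zs : Fin s → ℝ → (Fin m → ℝ)) (Yt : ℝ → (Fin m → ℝ))
    (hA : ContDiff ℝ 3 A) (hM : ContDiff ℝ 3 M1)
    (hZ : ContDiff ℝ 3 Z) (hY : ContDiff ℝ 3 Y)
    (hodeZ : ∀ t : ℝ, deriv Z t = A (Z t) + deriv (fun u => u • M1 (Z u)) t)
    (hodeY : ∀ t : ℝ, deriv Y t = A (Z t))
    (hZ0 : Z 0 = Y₀) (hY0 : Y 0 = Y₀)
    (hZs : ∀ i τ, Zs i τ
      = Y₀ + τ • ∑ j ∈ Finset.Iio i, (d i j • M1 (Zs j τ) + a i j • A (Zs j τ)))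
    (hYt : ∀ τ, Yt τ = Y₀ + τ • ∑ i, b i • A (Zs i τ))
    (hc1 : 3 * ∑ i, b i * (∑ j ∈ Finset.Iio i, a i j)^2 = 1)
    (hc2 : 3 * ∑ i, b i * (∑ j ∈ Finset.Iio i, d i j)^2 = 1)
    (hc3 : 3 * ∑ i, b i * (∑ j ∈ Finset.Iio i, a i j) * (∑ j ∈ Finset.Iio i, d i j) = 1)
    (hc4 : 6 * ∑ i, ∑ j ∈ Finset.Iio i, ∑ k ∈ Finset.Iio j, b i * a i j * a j k = 1)
    (hc5 : 6 * ∑ i, ∑ j ∈ Finset.Iio i, ∑ k ∈ Finset.Iio j, b i * a i j * d j k = 1)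
    (hc6 : 3 * ∑ i, ∑ j ∈ Finset.Iio i, ∑ k ∈ Finset.Iio j, b i * d i j * a j k = 1)
    (hc7 : 3 * ∑ i, ∑ j ∈ Finset.Iio i, ∑ k ∈ Finset.Iio j, b i * d i j * d j k = 1) :
    iteratedDeriv 3 Yt 0 = iteratedDeriv 3 Y 0 :=
  stmt12_general A M1 Y₀ b a d Z Y Zs Yt hA hM hZ hodeZ hodeY hZ0 hZs hYt hc1 hc2 hc3 hc4 hc5 hc6
    hc7
end

section
/- For any three-stage SARK method with linear operators Ã, M̃₁ and coefficients satisfying all first-, second-, and third-order SARK conditions, one step of size τ is the linear map Y ↦ (I + τ Ã + (τ²/2) Ã (M̃₁ + Ã) + (τ³/6) Ã (2M̃₁ + Ã)(M̃₁ + Ã)) Y. -/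
/-!
For linear operators each stage is a polynomial in `τ`, so one step is a polynomial in `A` and
`M₁` applied to `Y`; the coefficient of each word of length `k` is `τ ^ k` times an elementary
weight of the tableau (`∑ bᵢ`, `∑ bᵢ aᵢⱼ`, ..., `b₃ a₃₂ a₂₁`). The order conditions pin these
weights to the coefficients of the Taylor polynomial.
-/

open Finset

theorem Fin.Iio_three :
    Iio (0 : Fin 3) = ∅ ∧ Iio (1 : Fin 3) = {0} ∧ Iio (2 : Fin 3) = {0, 1} := by
  decide

theorem Fin.sum_Iio_three {R : Type*} [AddCommMonoid R] (f : Fin 3 → Fin 3 → R) :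
    ∑ i, ∑ j ∈ Iio i, f i j = f 1 0 + f 2 0 + f 2 1 := by
  simp [Fin.sum_univ_three, Fin.Iio_three, add_assoc]

theorem Fin.sum_Iio_Iio_three {R : Type*} [AddCommMonoid R] (f : Fin 3 → Fin 3 → Fin 3 → R) :
    ∑ i, ∑ j ∈ Iio i, ∑ k ∈ Iio j, f i j k = f 2 1 0 := by
  simp [Fin.sum_univ_three, Fin.Iio_three]

namespace SARK

section CommRing

variable {R E : Type*} [CommRing R] [AddCommGroup E] [Module R E]
  (A M : E →ₗ[R] E) (b : Fin 3 → R) (a d : Fin 3 → Fin 3 → R) (τ : R) (Y : E)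

def step3 : E :=
  let Z2 := Y + τ • (d 1 0 • M Y + a 1 0 • A Y)
  let Z3 := Y + τ • (d 2 0 • M Y + d 2 1 • M Z2 + a 2 0 • A Y + a 2 1 • A Z2)
  Y + τ • (b 0 • A Y + b 1 • A Z2 + b 2 • A Z3)

theorem step3_eq_elementaryWeights :
    step3 A M b a d τ Y =
      Y + (τ * (b 0 + b 1 + b 2)) • A Y
        + (τ ^ 2 * (b 1 * d 1 0 + b 2 * d 2 0 + b 2 * d 2 1)) • A (M Y)
        + (τ ^ 2 * (b 1 * a 1 0 + b 2 * a 2 0 + b 2 * a 2 1)) • A (A Y)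
        + (τ ^ 3 * (b 2 * d 2 1 * d 1 0)) • A (M (M Y))
        + (τ ^ 3 * (b 2 * d 2 1 * a 1 0)) • A (M (A Y))
        + (τ ^ 3 * (b 2 * a 2 1 * d 1 0)) • A (A (M Y))
        + (τ ^ 3 * (b 2 * a 2 1 * a 1 0)) • A (A (A Y)) := by
  simp only [step3, map_add, map_smul, smul_add, smul_smul]
  match_scalars <;> ring

end CommRing

theorem step3_eq_taylor {R E : Type*} [Field R] [CharZero R] [AddCommGroup E] [Module R E]
    (A M : E →ₗ[R] E) (τ : R) (Y : E) {b : Fin 3 → R} {a d : Fin 3 → Fin 3 → R}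
    (h1 : b 0 + b 1 + b 2 = 1)
    (h2a : 2 * (b 1 * a 1 0 + b 2 * a 2 0 + b 2 * a 2 1) = 1)
    (h2d : 2 * (b 1 * d 1 0 + b 2 * d 2 0 + b 2 * d 2 1) = 1)
    (h3aa : 6 * (b 2 * a 2 1 * a 1 0) = 1) (h3ad : 6 * (b 2 * a 2 1 * d 1 0) = 1)
    (h3da : 3 * (b 2 * d 2 1 * a 1 0) = 1) (h3dd : 3 * (b 2 * d 2 1 * d 1 0) = 1) :
    step3 A M b a d τ Y =
      Y + τ • A Y + (τ ^ 2 / 2) • A (M Y + A Y)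
        + (τ ^ 3 / 6) • A ((2 : R) • M (M Y + A Y) + A (M Y + A Y)) := by
  rw [step3_eq_elementaryWeights]
  simp only [map_add, map_smul, smul_add, smul_smul]
  match_scalars
  · ring
  · linear_combination τ * h1
  · linear_combination τ ^ 2 / 2 * h2d
  · linear_combination τ ^ 2 / 2 * h2a
  · linear_combination τ ^ 3 / 3 * h3dd
  · linear_combination τ ^ 3 / 3 * h3da
  · linear_combination τ ^ 3 / 6 * h3ad
  · linear_combination τ ^ 3 / 6 * h3aa

end SARK

theorem stmt17_general {m : ℕ}
    (A M1 : (Fin m → ℝ) →L[ℝ] (Fin m → ℝ))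
    (b : Fin 3 → ℝ) (a d : Fin 3 → Fin 3 → ℝ)
    (h1 : ∑ i, b i = 1)
    (h2a : 2 * ∑ i, ∑ j ∈ Finset.Iio i, b i * a i j = 1)
    (h2d : 2 * ∑ i, ∑ j ∈ Finset.Iio i, b i * d i j = 1)
    (h3aa : 6 * ∑ i, ∑ j ∈ Finset.Iio i, ∑ k ∈ Finset.Iio j, b i * a i j * a j k = 1)
    (h3adk : 6 * ∑ i, ∑ j ∈ Finset.Iio i, ∑ k ∈ Finset.Iio j, b i * a i j * d j k = 1)
    (h3da : 3 * ∑ i, ∑ j ∈ Finset.Iio i, ∑ k ∈ Finset.Iio j, b i * d i j * a j k = 1)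
    (h3dd : 3 * ∑ i, ∑ j ∈ Finset.Iio i, ∑ k ∈ Finset.Iio j, b i * d i j * d j k = 1)
    (Y : Fin m → ℝ) (τ : ℝ) :
    let Z1 := Y
    let Z2 := Y + τ • (d 1 0 • M1 Z1 + a 1 0 • A Z1)
    let Z3 := Y + τ • (d 2 0 • M1 Z1 + d 2 1 • M1 Z2 + a 2 0 • A Z1 + a 2 1 • A Z2)
    Y + τ • (b 0 • A Z1 + b 1 • A Z2 + b 2 • A Z3)
      = Y + τ • A Y + (τ^2 / 2) • A (M1 Y + A Y)
        + (τ^3 / 6) • A ((2:ℝ) • M1 (M1 Y + A Y) + A (M1 Y + A Y)) := by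
  rw [Fin.sum_univ_three] at h1
  rw [Fin.sum_Iio_three] at h2a h2d
  rw [Fin.sum_Iio_Iio_three] at h3aa h3adk h3da h3dd
  exact SARK.step3_eq_taylor A.toLinearMap M1.toLinearMap τ Y h1 h2a h2d h3aa h3adk h3da h3dd

/-- Propagation operator of a third-order three-stage SARK method (linear case). -/
theorem stmt17 {m : ℕ}
    (A M1 : (Fin m → ℝ) →L[ℝ] (Fin m → ℝ))
    (b : Fin 3 → ℝ) (a d : Fin 3 → Fin 3 → ℝ)
    (hlowa : ∀ i j : Fin 3, i ≤ j → a i j = 0)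
    (hlowd : ∀ i j : Fin 3, i ≤ j → d i j = 0)
    (h1 : ∑ i, b i = 1)
    (h2a : 2 * ∑ i, ∑ j ∈ Finset.Iio i, b i * a i j = 1)
    (h2d : 2 * ∑ i, ∑ j ∈ Finset.Iio i, b i * d i j = 1)
    (h3a : 3 * ∑ i, b i * (∑ j ∈ Finset.Iio i, a i j)^2 = 1)
    (h3d : 3 * ∑ i, b i * (∑ j ∈ Finset.Iio i, d i j)^2 = 1)
    (h3ad : 3 * ∑ i, b i * (∑ j ∈ Finset.Iio i, a i j) * (∑ j ∈ Finset.Iio i, d i j) = 1)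
    (h3aa : 6 * ∑ i, ∑ j ∈ Finset.Iio i, ∑ k ∈ Finset.Iio j, b i * a i j * a j k = 1)
    (h3adk : 6 * ∑ i, ∑ j ∈ Finset.Iio i, ∑ k ∈ Finset.Iio j, b i * a i j * d j k = 1)
    (h3da : 3 * ∑ i, ∑ j ∈ Finset.Iio i, ∑ k ∈ Finset.Iio j, b i * d i j * a j k = 1)
    (h3dd : 3 * ∑ i, ∑ j ∈ Finset.Iio i, ∑ k ∈ Finset.Iio j, b i * d i j * d j k = 1)
    (Y : Fin m → ℝ) (τ : ℝ) :
    let Z1 := Y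
    let Z2 := Y + τ • (d 1 0 • M1 Z1 + a 1 0 • A Z1)
    let Z3 := Y + τ • (d 2 0 • M1 Z1 + d 2 1 • M1 Z2 + a 2 0 • A Z1 + a 2 1 • A Z2)
    Y + τ • (b 0 • A Z1 + b 1 • A Z2 + b 2 • A Z3)
      = Y + τ • A Y + (τ^2 / 2) • A (M1 Y + A Y)
        + (τ^3 / 6) • A ((2:ℝ) • M1 (M1 Y + A Y) + A (M1 Y + A Y)) :=
  stmt17_general A M1 b a d h1 h2a h2d h3aa h3adk h3da h3dd Y τ
end
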